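/- arXiv:1610.00103 — 2 statements merged into one kernel-verified Lean document; each statement's English description precedes it below -/
import Mathlib

section
/- Let p > 1 and μ₀ > 0, and define the power-law stress T(D) = μ₀(1 + ‖D‖²)^{(p−2)/2} D for n×n real matrices D, where ‖·‖ is the Frobenius norm. Then T is strictly monotone: for all n×n real matrices D₁ ≠ D₂, (T(D₁) − T(D₂)) : (D₁ − D₂) > 0, where A : B denotes the Frobenius inner product ∑_{i,j} A_{ij} B_{ij}. -/
/-- The Frobenius inner product `A : B = ∑_{i,j} A i j * B i j` of two `n × n` real matrices. -/
def frobInner {n : ℕ} (A B : Matrix (Fin n) (Fin n) ℝ) : ℝ :=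
  ∑ i, ∑ j, A i j * B i j

/-- The power-law stress `T(D) = μ₀ (1 + ‖D‖²)^((p−2)/2) D`, where `‖D‖² = D : D`
is the squared Frobenius norm. -/
noncomputable def powerLawStress {n : ℕ} (p μ₀ : ℝ)
    (D : Matrix (Fin n) (Fin n) ℝ) : Matrix (Fin n) (Fin n) ℝ :=
  (μ₀ * (1 + frobInner D D) ^ ((p - 2) / 2)) • D

lemma frobInner_comm {n : ℕ} (A B : Matrix (Fin n) (Fin n) ℝ) :
    frobInner A B = frobInner B A := by
  simp [frobInner, mul_comm]

lemma frobInner_sub_left {n : ℕ} (A B C : Matrix (Fin n) (Fin n) ℝ) :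
    frobInner (A - B) C = frobInner A C - frobInner B C := by
  simp [frobInner, sub_mul, Finset.sum_sub_distrib]

lemma frobInner_sub_right {n : ℕ} (A B C : Matrix (Fin n) (Fin n) ℝ) :
    frobInner A (B - C) = frobInner A B - frobInner A C := by
  simp [frobInner, mul_sub, Finset.sum_sub_distrib]

lemma frobInner_smul_left {n : ℕ} (s : ℝ) (A B : Matrix (Fin n) (Fin n) ℝ) :
    frobInner (s • A) B = s * frobInner A B := by
  simp [frobInner, Finset.mul_sum, mul_assoc]

lemma frobInner_self_nonneg {n : ℕ} (A : Matrix (Fin n) (Fin n) ℝ) :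
    0 ≤ frobInner A A := by
  apply Finset.sum_nonneg; intro i _; apply Finset.sum_nonneg; intro j _
  exact mul_self_nonneg _

lemma frobInner_self_pos {n : ℕ} (A : Matrix (Fin n) (Fin n) ℝ) (h : A ≠ 0) :
    0 < frobInner A A := by
  rcases lt_or_eq_of_le (frobInner_self_nonneg A) with h' | h'
  · exact h'
  exfalso; apply h
  ext i j
  have hz : ∀ i ∈ Finset.univ, (∑ j, A i j * A i j) = 0 := by
    intro i _
    have := (Finset.sum_eq_zero_iff_of_nonneg (by
      intro i _; apply Finset.sum_nonneg; intro j _; exact mul_self_nonneg _)).mp h'.symm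
    exact this i (Finset.mem_univ i)
  have := (Finset.sum_eq_zero_iff_of_nonneg (by
    intro j _; exact mul_self_nonneg (A i j))).mp (hz i (Finset.mem_univ i)) j (Finset.mem_univ j)
  have : A i j = 0 := by nlinarith [this]
  simpa using this

lemma frobInner_cauchy {n : ℕ} (A B : Matrix (Fin n) (Fin n) ℝ) :
    frobInner A B ≤ Real.sqrt (frobInner A A) * Real.sqrt (frobInner B B) := by
  have h2 : (frobInner A B)^2 ≤ (frobInner A A) * (frobInner B B) := by
    have := Finset.sum_mul_sq_le_sq_mul_sq (Finset.univ : Finset (Fin n × Fin n))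
      (fun q => A q.1 q.2) (fun q => B q.1 q.2)
    simpa [frobInner, Fintype.sum_prod_type, pow_two] using this
  have hA := frobInner_self_nonneg A
  have hB := frobInner_self_nonneg B
  calc frobInner A B ≤ |frobInner A B| := le_abs_self _
    _ = Real.sqrt ((frobInner A B)^2) := (Real.sqrt_sq_eq_abs _).symm
    _ ≤ Real.sqrt ((frobInner A A) * (frobInner B B)) := Real.sqrt_le_sqrt h2
    _ = _ := Real.sqrt_mul hA _

/-- Strict monotonicity of the scalar function `t ↦ μ₀ (1+t²)^((p-2)/2) t` on `[0,∞)`. -/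
lemma scalar_mono (p μ₀ : ℝ) (hp : 1 < p) (hμ₀ : 0 < μ₀) {a b : ℝ}
    (ha : 0 ≤ a) (hab : a < b) :
    μ₀ * (1 + a^2) ^ ((p - 2) / 2) * a < μ₀ * (1 + b^2) ^ ((p - 2) / 2) * b := by
  have hb : 0 < b := lt_of_le_of_lt ha hab
  have ha2 : (0:ℝ) < 1 + a^2 := by positivity
  have hb2 : (0:ℝ) < 1 + b^2 := by positivity
  set q := (p - 2) / 2 with hq
  have hLnn : 0 ≤ μ₀ * (1 + a^2) ^ q * a := by positivity
  have hRnn : 0 ≤ μ₀ * (1 + b^2) ^ q * b := by positivity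
  -- square both sides
  refine lt_of_pow_lt_pow_left₀ 2 hRnn ?_
  have hsq : ∀ t : ℝ, 0 < 1 + t^2 →
      (μ₀ * (1 + t^2) ^ q * t)^2
        = μ₀^2 * ((1 + t^2) ^ (p-1) * (t^2 / (1 + t^2))) := by
    intro t ht
    have h1 : ((1 + t^2) ^ q)^2 = (1 + t^2) ^ (p - 2) := by
      rw [sq, ← Real.rpow_add ht]
      congr 1; rw [hq]; ring
    have h2 : (1 + t^2) ^ (p - 1) = (1 + t^2) ^ (p - 2) * (1 + t^2) := by
      rw [show p - 1 = (p - 2) + 1 by ring, Real.rpow_add ht, Real.rpow_one]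
    rw [mul_pow, mul_pow, h1, h2]
    field_simp
  rw [hsq a ha2, hsq b hb2]
  have hf1 : (1 + a^2) ^ (p-1) ≤ (1 + b^2) ^ (p-1) := by
    apply Real.rpow_le_rpow (le_of_lt ha2) (by nlinarith) (by linarith)
  have hf2 : a^2 / (1 + a^2) < b^2 / (1 + b^2) := by
    rw [div_lt_div_iff₀ ha2 hb2]
    nlinarith
  have hpos1 : (0:ℝ) < (1 + b^2) ^ (p-1) := Real.rpow_pos_of_pos hb2 _
  have hnn2 : 0 ≤ a^2 / (1 + a^2) := by positivity
  have := mul_lt_mul' hf1 hf2 hnn2 hpos1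
  exact mul_lt_mul_of_pos_left this (by positivity)


/-- **Strict monotonicity of the power-law stress.**
Let `p > 1` and `μ₀ > 0`, and let `T(D) = μ₀ (1 + ‖D‖²)^((p−2)/2) D` be the
power-law stress on `n × n` real matrices (`‖·‖` the Frobenius norm).  Then `T` is
strictly monotone: for all `D₁ ≠ D₂`, `(T(D₁) − T(D₂)) : (D₁ − D₂) > 0`. -/
theorem powerLawStress_strictly_monotone
    (n : ℕ) (p μ₀ : ℝ) (hp : 1 < p) (hμ₀ : 0 < μ₀)
    (D₁ D₂ : Matrix (Fin n) (Fin n) ℝ) (hne : D₁ ≠ D₂) :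
    0 < frobInner (powerLawStress p μ₀ D₁ - powerLawStress p μ₀ D₂) (D₁ - D₂) := by
  set I₁ := frobInner D₁ D₁ with hI₁
  set I₂ := frobInner D₂ D₂ with hI₂
  set c := frobInner D₁ D₂ with hc
  set α := μ₀ * (1 + I₁) ^ ((p - 2) / 2) with hα
  set β := μ₀ * (1 + I₂) ^ ((p - 2) / 2) with hβ
  have hI₁nn : 0 ≤ I₁ := frobInner_self_nonneg D₁
  have hI₂nn : 0 ≤ I₂ := frobInner_self_nonneg D₂
  have hαpos : 0 < α := by
    apply mul_pos hμ₀; exact Real.rpow_pos_of_pos (by linarith) _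
  have hβpos : 0 < β := by
    apply mul_pos hμ₀; exact Real.rpow_pos_of_pos (by linarith) _
  -- expand the expression
  have hE : frobInner (powerLawStress p μ₀ D₁ - powerLawStress p μ₀ D₂) (D₁ - D₂)
      = α * I₁ + β * I₂ - (α + β) * c := by
    simp only [powerLawStress, ← hI₁, ← hI₂, ← hα, ← hβ,
      frobInner_sub_left, frobInner_sub_right, frobInner_smul_left]
    rw [frobInner_comm D₂ D₁]
    ring
  rw [hE]
  set a := Real.sqrt I₁ with haa
  set b := Real.sqrt I₂ with hbb
  have ha2 : a^2 = I₁ := Real.sq_sqrt hI₁nn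
  have hb2 : b^2 = I₂ := Real.sq_sqrt hI₂nn
  have hann : 0 ≤ a := Real.sqrt_nonneg _
  have hbnn : 0 ≤ b := Real.sqrt_nonneg _
  have hcs : c ≤ a * b := frobInner_cauchy D₁ D₂
  rcases eq_or_ne a b with hab | hab
  · -- equal norms: α = β and the expression is α * ‖D₁ - D₂‖²
    have hI : I₁ = I₂ := by rw [← ha2, ← hb2, hab]
    have hαβ : α = β := by rw [hα, hβ, hI]
    have hDpos : 0 < frobInner (D₁ - D₂) (D₁ - D₂) :=
      frobInner_self_pos _ (sub_ne_zero.mpr hne)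
    have hexp : frobInner (D₁ - D₂) (D₁ - D₂) = I₁ - 2 * c + I₂ := by
      rw [frobInner_sub_left, frobInner_sub_right, frobInner_sub_right,
        frobInner_comm D₂ D₁, ← hI₁, ← hI₂, ← hc]
      ring
    rw [hαβ, hI]
    nlinarith [mul_pos hβpos hDpos]
  · -- different norms: use strict monotonicity of scalar function
    rcases lt_or_gt_of_ne hab with h | h
    · have key : α * a < β * b := by
        have := scalar_mono p μ₀ hp hμ₀ hann h
        rw [ha2, hb2] at this
        calc α * a = μ₀ * (1 + I₁) ^ ((p-2)/2) * a := by rw [hα]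
          _ < μ₀ * (1 + I₂) ^ ((p-2)/2) * b := this
          _ = β * b := by rw [hβ]
      nlinarith [mul_pos (sub_pos.mpr h) (sub_pos.mpr key),
        mul_nonneg (by linarith : (0:ℝ) ≤ α + β) (by linarith : 0 ≤ a * b - c)]
    · have key : β * b < α * a := by
        have := scalar_mono p μ₀ hp hμ₀ hbnn h
        rw [ha2, hb2] at this
        calc β * b = μ₀ * (1 + I₂) ^ ((p-2)/2) * b := by rw [hβ]
          _ < μ₀ * (1 + I₁) ^ ((p-2)/2) * a := this
          _ = α * a := by rw [hα]
      nlinarith [mul_pos (sub_pos.mpr h) (sub_pos.mpr key),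
        mul_nonneg (by linarith : (0:ℝ) ≤ α + β) (by linarith : 0 ≤ a * b - c)]
end

section
/- Let ρ₁₀, ρ₂₀ be positive real constants with ρ₁₀ ≠ ρ₂₀, let ρ₁, ρ₂ > 0 satisfy ρ₁/ρ₁₀ + ρ₂/ρ₂₀ = 1, and set ρ = ρ₁ + ρ₂, α = ρ₁/ρ₁₀, c = ρ₁/ρ. Let v₁, v₂, g be vectors in ℝⁿ and λ ∈ ℝ, and define the mean volume velocity v = α v₁ + (1 − α) v₂ and the mean mass velocity w = c v₁ + (1 − c) v₂. If the generalized Fick law v₁ = w − (λ/c) g holds, then ρ₁ρ₂₀ + ρ₂ρ₁₀ = ρ₁₀ρ₂₀ and w = v + (λ/c) · (ρ₁(ρ₂₀ − ρ₁₀)/(ρ₁₀ ρ₂₀)) · g. -/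
/-! The mass velocity and the volume velocity are two affine combinations of `v₁, v₂`, so
`w - v = (α - c) • (v₂ - v₁)`, while the Fick law together with the definition of `w` gives
`(1 - c) • (v₂ - v₁) = (λ / c) • g`. It remains to check the scalar identity
`α - c = (1 - c) · ρ₁(ρ₂₀ - ρ₁₀)/(ρ₁₀ρ₂₀)`, which is the volume-additivity relation in disguise. -/

theorem mul_add_mul_eq_mul_of_div_add_div_eq_one {K : Type*} [Field K] {a b x y : K}
    (ha : a ≠ 0) (hb : b ≠ 0) (h : x / a + y / b = 1) : x * b + y * a = a * b := by
  field_simp at h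
  linear_combination h

theorem div_sub_div_add_eq_one_sub_div_add_mul {K : Type*} [Field K] {ρ₁₀ ρ₂₀ ρ₁ ρ₂ : K}
    (h₁₀ : ρ₁₀ ≠ 0) (h₂₀ : ρ₂₀ ≠ 0) (hρ : ρ₁ + ρ₂ ≠ 0) (hvol : ρ₁ / ρ₁₀ + ρ₂ / ρ₂₀ = 1) :
    ρ₁ / ρ₁₀ - ρ₁ / (ρ₁ + ρ₂)
      = (1 - ρ₁ / (ρ₁ + ρ₂)) * (ρ₁ * (ρ₂₀ - ρ₁₀) / (ρ₁₀ * ρ₂₀)) := by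
  have hvol' := mul_add_mul_eq_mul_of_div_add_div_eq_one h₁₀ h₂₀ hvol
  field_simp
  linear_combination ρ₁ * hvol'

theorem eq_add_smul_of_sub_eq_one_sub_mul {R E : Type*} [CommRing R] [AddCommGroup E]
    [Module R E] {v₁ v₂ g v w : E} {α c t k : R}
    (hv : v = α • v₁ + (1 - α) • v₂) (hw : w = c • v₁ + (1 - c) • v₂)
    (hFick : v₁ = w - t • g) (hαc : α - c = (1 - c) * k) :
    w = v + (t * k) • g := by
  have hdiff : (1 - c) • (v₂ - v₁) = t • g := by
    rw [eq_sub_iff_add_eq, hw] at hFick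
    linear_combination (norm := module) -hFick
  calc w = v + (α - c) • (v₂ - v₁) := by rw [hv, hw]; module
    _ = v + k • ((1 - c) • (v₂ - v₁)) := by rw [hαc, mul_comm, mul_smul]
    _ = v + (t * k) • g := by rw [hdiff, smul_smul, mul_comm]

theorem mean_mass_velocity_fick_general
    (n : ℕ) (ρ₁₀ ρ₂₀ ρ₁ ρ₂ lam : ℝ)
    (h₁₀ : 0 < ρ₁₀) (h₂₀ : 0 < ρ₂₀)
    (h₁ : 0 < ρ₁) (h₂ : 0 < ρ₂)
    (hvol : ρ₁ / ρ₁₀ + ρ₂ / ρ₂₀ = 1)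
    (v₁ v₂ g : EuclideanSpace ℝ (Fin n))
    (ρ α c : ℝ) (hρ : ρ = ρ₁ + ρ₂) (hα : α = ρ₁ / ρ₁₀) (hc : c = ρ₁ / ρ)
    (v w : EuclideanSpace ℝ (Fin n))
    (hv : v = α • v₁ + (1 - α) • v₂) (hw : w = c • v₁ + (1 - c) • v₂)
    (hFick : v₁ = w - (lam / c) • g) :
    ρ₁ * ρ₂₀ + ρ₂ * ρ₁₀ = ρ₁₀ * ρ₂₀
    ∧ w = v + ((lam / c) * (ρ₁ * (ρ₂₀ - ρ₁₀) / (ρ₁₀ * ρ₂₀))) • g := by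
  subst hρ hα hc
  refine ⟨mul_add_mul_eq_mul_of_div_add_div_eq_one h₁₀.ne' h₂₀.ne' hvol,
    eq_add_smul_of_sub_eq_one_sub_mul hv hw hFick ?_⟩
  exact div_sub_div_add_eq_one_sub_div_add_mul h₁₀.ne' h₂₀.ne' (by positivity) hvol

/-- **Mean mass velocity via the generalized Fick law.**
Let `ρ₁₀, ρ₂₀ > 0` with `ρ₁₀ ≠ ρ₂₀`, let `ρ₁, ρ₂ > 0` satisfy `ρ₁/ρ₁₀ + ρ₂/ρ₂₀ = 1`,
and set `ρ = ρ₁ + ρ₂`, `α = ρ₁/ρ₁₀`, `c = ρ₁/ρ`.  Let `v₁, v₂, g ∈ ℝⁿ` and `λ ∈ ℝ`,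
and define `v = α v₁ + (1 − α) v₂`, `w = c v₁ + (1 − c) v₂`.  If the generalized Fick
law `v₁ = w − (λ/c) g` holds, then `ρ₁ρ₂₀ + ρ₂ρ₁₀ = ρ₁₀ρ₂₀` and
`w = v + (λ/c) · (ρ₁(ρ₂₀ − ρ₁₀)/(ρ₁₀ρ₂₀)) · g`. -/
theorem mean_mass_velocity_fick
    (n : ℕ) (ρ₁₀ ρ₂₀ ρ₁ ρ₂ lam : ℝ)
    (h₁₀ : 0 < ρ₁₀) (h₂₀ : 0 < ρ₂₀) (hne : ρ₁₀ ≠ ρ₂₀)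
    (h₁ : 0 < ρ₁) (h₂ : 0 < ρ₂)
    (hvol : ρ₁ / ρ₁₀ + ρ₂ / ρ₂₀ = 1)
    (v₁ v₂ g : EuclideanSpace ℝ (Fin n))
    (ρ α c : ℝ) (hρ : ρ = ρ₁ + ρ₂) (hα : α = ρ₁ / ρ₁₀) (hc : c = ρ₁ / ρ)
    (v w : EuclideanSpace ℝ (Fin n))
    (hv : v = α • v₁ + (1 - α) • v₂) (hw : w = c • v₁ + (1 - c) • v₂)
    (hFick : v₁ = w - (lam / c) • g) :
    ρ₁ * ρ₂₀ + ρ₂ * ρ₁₀ = ρ₁₀ * ρ₂₀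
    ∧ w = v + ((lam / c) * (ρ₁ * (ρ₂₀ - ρ₁₀) / (ρ₁₀ * ρ₂₀))) • g :=
  mean_mass_velocity_fick_general n ρ₁₀ ρ₂₀ ρ₁ ρ₂ lam h₁₀ h₂₀ h₁ h₂ hvol v₁ v₂ g ρ α c hρ hα hc v w
    hv hw hFick
end
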